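/- Assume θ_1 < 1 and write w_θ(x,Q) := w_θ(x,Q;𝟏) with 𝟏=(1,…,1)∈ℝ^K. Suppose that the minimum in the dual recursive formula w_θ(x,Q) = (1−θ_1)·min_{τ∈Δ(J)^L} min_{(x_{ij}): Σ_j x_{ij}=(x−θ_1 G^Q_{iτ})/(1−θ_1) ∀i} max_{i∈I} Σ_{j∈J} w_{θ^+}(x_{ij},Q_j;ζ_j) is attained at a pair (τ,(x_{ij})) with τ non-revealing, i.e. τ^ℓ = τ̄∈Δ(J) for all ℓ∈L. Then w_θ(x,Q) = (1−θ_1)·max_{i∈I} w_{θ^+}( (x − θ_1·G^Q_{iτ̄})/(1−θ_1), Q ), where G^{k,Q}_{iτ̄} := Σ_{ℓ,j} Q(ℓ|k)τ̄(j)G^{kℓ}(i,j), and in the formula Q_j, ζ_j are determined by Q, τ, ζ=𝟏 as: P^Q_τ(j|k) := Σ_ℓ Q(ℓ|k)τ^ℓ(j); Q_j(ℓ|k) := Q(ℓ|k)τ^ℓ(j)/P^Q_τ(j|k) if P^Q_τ(j|k)>0 and Q_j(·|k) := Q(·|k) otherwise; ζ_j^k := P^Q_τ(j|k). -/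

import Mathlib

/-!
Against a non-revealing first-stage action `τ̄` the beliefs do not move: `Q_j = Q` and
`ζ_j = τ̄_j 𝟏`.

For `≤`, player 2 plays `τ̄` at the first stage and then, after player 1's action `i`, an
`ε`-optimal strategy of the dual game at `y_i = (x − θ_1 G^Q_{iτ̄})/(1 − θ_1)` and `θ⁺`. Since
`x = θ_1 G^Q_{iτ̄} + (1 − θ_1) y_i`, the dual payoff of any `(p, ŝ)` against this strategy is
`(1 − θ_1)` times an average of continuation dual payoffs, with unnormalised beliefs
`p^k ŝ(k)(i)`, and each of those is at most its total mass times `w_{θ⁺}(y_i, Q) + ε`.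

For `≥`, the dual value satisfies `w(Σ_j x_j, Q; 𝟏) ≤ Σ_j w(x_j, Q; τ̄_j 𝟏)`: player 2 mixes
`ε`-optimal strategies of the summands with weights `τ̄_j`, the mixture being realised as a
behavioural strategy as in Kuhn's theorem. Together with the attainment hypothesis and
`Σ_j x_{ij} = y_i` this gives the reverse inequality.
-/

open scoped BigOperators

noncomputable section RepeatedGames

/-- Probability of a finite history (list of action pairs, in chronological
order) under behavioral strategies `s`, `t` (which map the list of past action
pairs to a mixed action). -/
def probH {I J : Type*} (s : List (I × J) → I → ℝ) (t : List (I × J) → J → ℝ) :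
    List (I × J) → ℝ
  | [] => 1
  | a :: h =>
      s [] a.1 * t [] a.2 *
        probH (fun h' => s (a :: h')) (fun h' => t (a :: h')) h

/-- Expected stage payoff at stage `m+1` (i.e. after `m` completed stages). -/
def stagePay {I J : Type*} [Fintype I] [Fintype J]
    (s : List (I × J) → I → ℝ) (t : List (I × J) → J → ℝ)
    (g : I → J → ℝ) (m : ℕ) : ℝ :=
  ∑ h : Fin m → I × J,
    probH s t (List.ofFn h) *
      ∑ i, ∑ j, s (List.ofFn h) i * t (List.ofFn h) j * g i j

/-- Behavioral strategies of a player with type set `X` and action set `A`,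
observing histories in `(I × J)^*`. -/
def Strat (I J X A : Type*) [Fintype A] : Type _ :=
  {f : X → List (I × J) → A → ℝ // ∀ x h, f x h ∈ stdSimplex ℝ A}

instance {I J X A : Type*} [Fintype A] [Nonempty A] :
    Nonempty (Strat I J X A) := by
  refine ⟨⟨fun _ _ _ => (Fintype.card A : ℝ)⁻¹, fun x h => ⟨fun a => by positivity, ?_⟩⟩⟩
  have hA : (Fintype.card A : ℝ) ≠ 0 := by
    exact_mod_cast Fintype.card_ne_zero
  simp [Finset.sum_const, Finset.card_univ, nsmul_eq_mul, mul_inv_cancel₀ hA]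

/-- The auxiliary `θ`-weighted payoff `γ_θ(π, ŝ, t̂; ζ)`. -/
def payA {I J K L : Type*} [Fintype I] [Fintype J] [Fintype K] [Fintype L]
    (θ : ℕ → ℝ) (G : K → L → I → J → ℝ) (π : K × L → ℝ) (ζ : K → ℝ)
    (s : Strat I J K I) (t : Strat I J L J) : ℝ :=
  ∑ k, ∑ l, π (k, l) * ζ k *
    ∑' m : ℕ, θ m * stagePay (s.1 k) (t.1 l) (G k l) m

/-- The `θ`-weighted payoff `γ_θ(π, ŝ, t̂)`. -/
def pay {I J K L : Type*} [Fintype I] [Fintype J] [Fintype K] [Fintype L]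
    (θ : ℕ → ℝ) (G : K → L → I → J → ℝ) (π : K × L → ℝ)
    (s : Strat I J K I) (t : Strat I J L J) : ℝ :=
  payA θ G π (fun _ => 1) s t

/-- Maxmin `v⁻_θ(π)` of the repeated game `𝒢_θ(π)`. -/
def vMinus {I J K L : Type*} [Fintype I] [Fintype J] [Fintype K] [Fintype L]
    (θ : ℕ → ℝ) (G : K → L → I → J → ℝ) (π : K × L → ℝ) : ℝ :=
  ⨆ s : Strat I J K I, ⨅ t : Strat I J L J, pay θ G π s t

/-- Minmax `v⁺_θ(π)` of the repeated game `𝒢_θ(π)`. -/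
def vPlus {I J K L : Type*} [Fintype I] [Fintype J] [Fintype K] [Fintype L]
    (θ : ℕ → ℝ) (G : K → L → I → J → ℝ) (π : K × L → ℝ) : ℝ :=
  ⨅ t : Strat I J L J, ⨆ s : Strat I J K I, pay θ G π s t

/-- Dual payoff `h_θ[x,Q;ζ](p,ŝ,t̂) = γ_θ(p⊗Q, ŝ, t̂; ζ) − ⟨p,x⟩`. -/
def hDual {I J K L : Type*} [Fintype I] [Fintype J] [Fintype K] [Fintype L]
    (θ : ℕ → ℝ) (G : K → L → I → J → ℝ) (x : K → ℝ) (Q : K → L → ℝ)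
    (ζ : K → ℝ) (p : K → ℝ) (s : Strat I J K I) (t : Strat I J L J) : ℝ :=
  payA θ G (fun kl => p kl.1 * Q kl.1 kl.2) ζ s t - ∑ k, p k * x k

/-- Maxmin `w⁻_θ(x,Q;ζ)` of the dual game `𝒟[𝒢_θ](x,Q;ζ)`. -/
def wMinus {I J K L : Type*} [Fintype I] [Fintype J] [Fintype K] [Fintype L]
    (θ : ℕ → ℝ) (G : K → L → I → J → ℝ) (x : K → ℝ) (Q : K → L → ℝ)
    (ζ : K → ℝ) : ℝ :=
  ⨆ ps : stdSimplex ℝ K × Strat I J K I, ⨅ t : Strat I J L J,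
    hDual θ G x Q ζ (ps.1 : K → ℝ) ps.2 t

/-- Minmax `w⁺_θ(x,Q;ζ)` of the dual game `𝒟[𝒢_θ](x,Q;ζ)`. -/
def wPlus {I J K L : Type*} [Fintype I] [Fintype J] [Fintype K] [Fintype L]
    (θ : ℕ → ℝ) (G : K → L → I → J → ℝ) (x : K → ℝ) (Q : K → L → ℝ)
    (ζ : K → ℝ) : ℝ :=
  ⨅ t : Strat I J L J, ⨆ ps : stdSimplex ℝ K × Strat I J K I,
    hDual θ G x Q ζ (ps.1 : K → ℝ) ps.2 t

end RepeatedGames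

section StagePay

variable {I J : Type*} [Fintype I] [Fintype J]

lemma sum_ofFn_succ {α : Type*} [Fintype α] {m : ℕ} (F : List α → ℝ) :
    ∑ h : Fin (m + 1) → α, F (List.ofFn h) = ∑ a, ∑ h : Fin m → α, F (a :: List.ofFn h) := by
  rw [← Fintype.sum_prod_type']
  exact Fintype.sum_equiv (Fin.consEquiv fun _ => α).symm _ _ fun h =>
    congrArg F (List.ofFn_succ (f := h))

lemma stagePay_zero (s : List (I × J) → I → ℝ) (t : List (I × J) → J → ℝ) (g : I → J → ℝ) :
    stagePay s t g 0 = ∑ i, s [] i * ∑ j, t [] j * g i j := by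
  simp [stagePay, probH, Finset.mul_sum, mul_assoc]

lemma stagePay_succ (s : List (I × J) → I → ℝ) (t : List (I × J) → J → ℝ) (g : I → J → ℝ)
    (m : ℕ) :
    stagePay s t g (m + 1) = ∑ i, s [] i * ∑ j, t [] j *
      stagePay (fun h => s ((i, j) :: h)) (fun h => t ((i, j) :: h)) g m := by
  rw [stagePay, sum_ofFn_succ (F := fun h => probH s t h * ∑ i, ∑ j, s h i * t h j * g i j),
    Fintype.sum_prod_type]
  simp only [stagePay, probH, Finset.mul_sum, mul_assoc]

lemma abs_sum_mul_le_of_mem_stdSimplex {ι : Type*} [Fintype ι] {w f : ι → ℝ} {C : ℝ}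
    (hw : w ∈ stdSimplex ℝ ι) (hf : ∀ i, |f i| ≤ C) : |∑ i, w i * f i| ≤ C :=
  calc |∑ i, w i * f i| ≤ ∑ i, w i * C :=
        (Finset.abs_sum_le_sum_abs _ _).trans <| Finset.sum_le_sum fun i _ => by
          rw [abs_mul, abs_of_nonneg (hw.1 i)]
          exact mul_le_mul_of_nonneg_left (hf i) (hw.1 i)
    _ = C := by rw [← Finset.sum_mul, hw.2, one_mul]

lemma abs_stagePay_le {s : List (I × J) → I → ℝ} {t : List (I × J) → J → ℝ}
    (hs : ∀ h, s h ∈ stdSimplex ℝ I) (ht : ∀ h, t h ∈ stdSimplex ℝ J) (g : I → J → ℝ)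
    (m : ℕ) : |stagePay s t g m| ≤ ‖g‖ := by
  induction m generalizing s t with
  | zero =>
    rw [stagePay_zero]
    refine abs_sum_mul_le_of_mem_stdSimplex (hs []) fun i =>
      abs_sum_mul_le_of_mem_stdSimplex (ht []) fun j => ?_
    exact (norm_le_pi_norm (g i) j).trans (norm_le_pi_norm g i)
  | succ m ih =>
    rw [stagePay_succ]
    exact abs_sum_mul_le_of_mem_stdSimplex (hs []) fun i =>
      abs_sum_mul_le_of_mem_stdSimplex (ht []) fun j =>
        ih (fun h => hs ((i, j) :: h)) (fun h => ht ((i, j) :: h))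

end StagePay

section WeightedPay

variable {I J : Type*} [Fintype I] [Fintype J]

noncomputable def weightedPay (θ : ℕ → ℝ) (s : List (I × J) → I → ℝ) (t : List (I × J) → J → ℝ)
    (g : I → J → ℝ) : ℝ :=
  ∑' m, θ m * stagePay s t g m

variable {θ : ℕ → ℝ} {s : List (I × J) → I → ℝ} {t : List (I × J) → J → ℝ}

lemma norm_mul_stagePay_le (hθ0 : ∀ m, 0 ≤ θ m) (hs : ∀ h, s h ∈ stdSimplex ℝ I)
    (ht : ∀ h, t h ∈ stdSimplex ℝ J) (g : I → J → ℝ) (m : ℕ) :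
    ‖θ m * stagePay s t g m‖ ≤ θ m * ‖g‖ := by
  rw [Real.norm_eq_abs, abs_mul, abs_of_nonneg (hθ0 m)]
  exact mul_le_mul_of_nonneg_left (abs_stagePay_le hs ht g m) (hθ0 m)

lemma summable_mul_stagePay (hθ : Summable θ) (hθ0 : ∀ m, 0 ≤ θ m)
    (hs : ∀ h, s h ∈ stdSimplex ℝ I) (ht : ∀ h, t h ∈ stdSimplex ℝ J) (g : I → J → ℝ) :
    Summable fun m => θ m * stagePay s t g m :=
  (hθ.mul_right ‖g‖).of_norm_bounded (norm_mul_stagePay_le hθ0 hs ht g)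

lemma abs_weightedPay_le (hθ : Summable θ) (hθ0 : ∀ m, 0 ≤ θ m)
    (hs : ∀ h, s h ∈ stdSimplex ℝ I) (ht : ∀ h, t h ∈ stdSimplex ℝ J) (g : I → J → ℝ) :
    |weightedPay θ s t g| ≤ (∑' m, θ m) * ‖g‖ :=
  tsum_of_norm_bounded (hθ.hasSum.mul_right ‖g‖) (norm_mul_stagePay_le hθ0 hs ht g)

lemma weightedPay_const_mul (c : ℝ) (s : List (I × J) → I → ℝ) (t : List (I × J) → J → ℝ)
    (g : I → J → ℝ) : weightedPay (fun m => c * θ m) s t g = c * weightedPay θ s t g := by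
  simp only [weightedPay, mul_assoc, tsum_mul_left]

lemma weightedPay_eq_add_shift (hθ : Summable θ) (hθ0 : ∀ m, 0 ≤ θ m)
    (hs : ∀ h, s h ∈ stdSimplex ℝ I) (ht : ∀ h, t h ∈ stdSimplex ℝ J) (g : I → J → ℝ) :
    weightedPay θ s t g = θ 0 * ∑ i, s [] i * ∑ j, t [] j * g i j +
      ∑ i, s [] i * ∑ j, t [] j * weightedPay (fun m => θ (m + 1))
        (fun h => s ((i, j) :: h)) (fun h => t ((i, j) :: h)) g := by
  have hcont : ∀ i j, HasSum (fun m => θ (m + 1) *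
      stagePay (fun h => s ((i, j) :: h)) (fun h => t ((i, j) :: h)) g m)
      (weightedPay (fun m => θ (m + 1)) (fun h => s ((i, j) :: h))
        (fun h => t ((i, j) :: h)) g) := fun i j =>
    (summable_mul_stagePay ((summable_nat_add_iff 1).2 hθ) (fun m => hθ0 (m + 1))
      (fun h => hs _) (fun h => ht _) g).hasSum
  rw [weightedPay, (summable_mul_stagePay hθ hθ0 hs ht g).tsum_eq_zero_add, stagePay_zero]
  congr 1
  refine HasSum.tsum_eq ?_
  simp only [stagePay_succ, Finset.mul_sum, mul_left_comm (θ _)]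
  exact hasSum_sum fun i _ => hasSum_sum fun j _ => by
    simpa only [Finset.mul_sum] using ((hcont i j).mul_left (t [] j)).mul_left (s [] i)

end WeightedPay

lemma mul_sum_mul_sum_eq_sum_mul {ι I J : Type*} [Fintype ι] [Fintype I] [Fintype J]
    {c : ι → ℝ} {x : I → ℝ} {A : ℝ} {Y : I → J → ℝ} {Z : ι → I → J → ℝ}
    (h : ∀ i b, A * Y i b = ∑ j, c j * Z j i b) :
    A * ∑ i, x i * ∑ b, Y i b = ∑ j, c j * ∑ i, x i * ∑ b, Z j i b := by
  simp only [Finset.mul_sum, mul_left_comm A, h]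
  conv_rhs => rw [Finset.sum_comm]
  refine Finset.sum_congr rfl fun i _ => ?_
  rw [Finset.sum_comm]
  exact Finset.sum_congr rfl fun j _ => Finset.sum_congr rfl fun b _ => by ring

section KuhnMix

variable {ι I J : Type*} [Fintype ι] [Fintype J] [Nonempty J]

noncomputable def mixAct (c : ι → ℝ) (σ : ι → J → ℝ) : J → ℝ :=
  if 0 < ∑ j, c j then fun b => (∑ j, c j * σ j b) / ∑ j, c j
  else (stdSimplex.barycenter : stdSimplex ℝ J).1

variable {c : ι → ℝ}

lemma sum_mul_mixAct (hc : ∀ j, 0 ≤ c j) (σ : ι → J → ℝ) (b : J) :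
    (∑ j, c j) * mixAct c σ b = ∑ j, c j * σ j b := by
  by_cases hpos : 0 < ∑ j, c j
  · simp only [mixAct, if_pos hpos]
    exact mul_div_cancel₀ _ hpos.ne'
  · have hzero : ∀ j, c j = 0 := fun j =>
      (Finset.sum_eq_zero_iff_of_nonneg fun j _ => hc j).1
        (le_antisymm (not_lt.1 hpos) (Finset.sum_nonneg fun j _ => hc j)) j (Finset.mem_univ j)
    simp [hzero]

lemma mixAct_mem (hc : ∀ j, 0 ≤ c j) {σ : ι → J → ℝ} (hσ : ∀ j, σ j ∈ stdSimplex ℝ J) :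
    mixAct c σ ∈ stdSimplex ℝ J := by
  by_cases hpos : 0 < ∑ j, c j
  · simp only [mixAct, if_pos hpos]
    refine ⟨fun b => div_nonneg (Finset.sum_nonneg fun j _ =>
      mul_nonneg (hc j) ((hσ j).1 b)) hpos.le, ?_⟩
    rw [← Finset.sum_div, Finset.sum_comm]
    simp only [← Finset.mul_sum, (hσ _).2, mul_one]
    exact div_self hpos.ne'
  · simp only [mixAct, if_neg hpos]
    exact Subtype.prop _

/-- Kuhn's behavioural form of the mixture of `ts` with weights `c`: after each stage the weights
are multiplied by the probabilities the components gave to player 2's observed action. -/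
noncomputable def kuhnMix (c : ι → ℝ) (ts : ι → List (I × J) → J → ℝ) :
    List (I × J) → J → ℝ
  | [] => mixAct c fun j => ts j []
  | a :: h => kuhnMix (fun j => c j * ts j [] a.2) (fun j h' => ts j (a :: h')) h

lemma kuhnMix_mem (hc : ∀ j, 0 ≤ c j) {ts : ι → List (I × J) → J → ℝ}
    (hts : ∀ j h, ts j h ∈ stdSimplex ℝ J) (h : List (I × J)) :
    kuhnMix c ts h ∈ stdSimplex ℝ J := by
  induction h generalizing c ts with
  | nil => exact mixAct_mem hc fun j => hts j []
  | cons a h ih =>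
    exact ih (fun j => mul_nonneg (hc j) ((hts j []).1 a.2)) fun j h' => hts j (a :: h')

lemma sum_mul_stagePay_kuhnMix [Fintype I] {s : List (I × J) → I → ℝ} (hc : ∀ j, 0 ≤ c j)
    {ts : ι → List (I × J) → J → ℝ} (hts : ∀ j h, ts j h ∈ stdSimplex ℝ J) (g : I → J → ℝ)
    (m : ℕ) :
    (∑ j, c j) * stagePay s (kuhnMix c ts) g m = ∑ j, c j * stagePay s (ts j) g m := by
  induction m generalizing s c ts with
  | zero =>
    simp only [stagePay_zero]
    refine mul_sum_mul_sum_eq_sum_mul fun i b => ?_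
    rw [← mul_assoc, kuhnMix, sum_mul_mixAct hc, Finset.sum_mul]
    simp only [mul_assoc]
  | succ m ih =>
    simp only [stagePay_succ]
    refine mul_sum_mul_sum_eq_sum_mul fun i b => ?_
    rw [← mul_assoc, kuhnMix, sum_mul_mixAct hc]
    simp only [kuhnMix]
    rw [ih (fun j => mul_nonneg (hc j) ((hts j []).1 b)) fun j h => hts j ((i, b) :: h),
      Finset.sum_congr rfl fun j _ => mul_assoc (c j) _ _]

end KuhnMix

lemma weightedPay_kuhnMix {ι I J : Type*} [Fintype ι] [Fintype I] [Fintype J] [Nonempty J]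
    {θ : ℕ → ℝ} (hθ : Summable θ) (hθ0 : ∀ m, 0 ≤ θ m) {s : List (I × J) → I → ℝ}
    (hs : ∀ h, s h ∈ stdSimplex ℝ I) {c : ι → ℝ} (hc : c ∈ stdSimplex ℝ ι)
    {ts : ι → List (I × J) → J → ℝ} (hts : ∀ j h, ts j h ∈ stdSimplex ℝ J) (g : I → J → ℝ) :
    weightedPay θ s (kuhnMix c ts) g = ∑ j, c j * weightedPay θ s (ts j) g := by
  have hstage : ∀ m, θ m * stagePay s (kuhnMix c ts) g m
      = ∑ j, c j * (θ m * stagePay s (ts j) g m) := fun m => by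
    have := sum_mul_stagePay_kuhnMix (s := s) hc.1 hts g m
    rw [hc.2, one_mul] at this
    rw [this, Finset.mul_sum]
    exact Finset.sum_congr rfl fun j _ => mul_left_comm _ _ _
  refine (tsum_congr hstage).trans (HasSum.tsum_eq ?_)
  exact hasSum_sum fun j _ => (summable_mul_stagePay hθ hθ0 hs (hts j) g).hasSum.mul_left (c j)

def Strat.cont {I J X A : Type*} [Fintype A] (s : Strat I J X A) (a : I × J) : Strat I J X A :=
  ⟨fun x h => s.1 x (a :: h), fun x h => s.2 x (a :: h)⟩

noncomputable def Strat.mix {ι I J L : Type*} [Fintype ι] [Fintype J] [Nonempty J]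
    (c : ι → ℝ) (hc : ∀ j, 0 ≤ c j) (ts : ι → Strat I J L J) : Strat I J L J :=
  ⟨fun l => kuhnMix c fun j => (ts j).1 l, fun l => kuhnMix_mem hc fun j => (ts j).2 l⟩

def Strat.firstThen {I J L : Type*} [Fintype J] (τ : J → ℝ) (hτ : τ ∈ stdSimplex ℝ J)
    (t : I → Strat I J L J) : Strat I J L J :=
  ⟨fun l h => match h with
    | [] => τ
    | a :: h => (t a.1).1 l h,
   fun l h => match h with
    | [] => hτ
    | a :: h => (t a.1).2 l h⟩

section DualGame

variable {K L I J : Type*} [Fintype K] [Fintype L] [Fintype I] [Fintype J]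
  {θ : ℕ → ℝ} {G : K → L → I → J → ℝ} {x : K → ℝ} {Q : K → L → ℝ} {ζ : K → ℝ}

lemma payA_eq_sum_weightedPay (π : K × L → ℝ) (s : Strat I J K I) (t : Strat I J L J) :
    payA θ G π ζ s t = ∑ k, ∑ l, π (k, l) * ζ k * weightedPay θ (s.1 k) (t.1 l) (G k l) :=
  rfl

lemma hDual_smul (a : ℝ) (p : K → ℝ) (s : Strat I J K I) (t : Strat I J L J) :
    hDual θ G x Q ζ (a • p) s t = a * hDual θ G x Q ζ p s t := by
  simp only [hDual, payA, Pi.smul_apply, smul_eq_mul, mul_sub, Finset.mul_sum, mul_assoc]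

lemma hDual_le_sum_mul {p : K → ℝ} (hp : ∀ k, 0 ≤ p k) {s : Strat I J K I}
    {t : Strat I J L J} {B : ℝ} (hB : ∀ p' ∈ stdSimplex ℝ K, hDual θ G x Q ζ p' s t ≤ B) :
    hDual θ G x Q ζ p s t ≤ (∑ k, p k) * B := by
  rcases (Finset.sum_nonneg (s := Finset.univ) fun k _ => hp k).eq_or_lt with hzero | hpos
  · have hp0 : p = (0 : ℝ) • p := by
      rw [zero_smul]
      exact (Fintype.sum_eq_zero_iff_of_nonneg hp).1 hzero.symm
    conv_lhs => rw [hp0]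
    rw [hDual_smul, ← hzero, zero_mul, zero_mul]
  · have hnorm : (fun k => p k / ∑ k', p k') ∈ stdSimplex ℝ K :=
      ⟨fun k => div_nonneg (hp k) hpos.le, by rw [← Finset.sum_div, div_self hpos.ne']⟩
    have hp_eq : p = (∑ k, p k) • fun k => p k / ∑ k', p k' :=
      funext fun k => (mul_div_cancel₀ (p k) hpos.ne').symm
    conv_lhs => rw [hp_eq]
    rw [hDual_smul]
    exact mul_le_mul_of_nonneg_left (hB _ hnorm) hpos.le

lemma abs_hDual_le (hθ : Summable θ) (hθ0 : ∀ m, 0 ≤ θ m) (hQ : ∀ k, Q k ∈ stdSimplex ℝ L)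
    {p : K → ℝ} (hp : p ∈ stdSimplex ℝ K) (s : Strat I J K I) (t : Strat I J L J) :
    |hDual θ G x Q ζ p s t| ≤ ‖ζ‖ * ((∑' m, θ m) * ‖G‖) + ‖x‖ := by
  have hpay : payA θ G (fun kl => p kl.1 * Q kl.1 kl.2) ζ s t
      = ∑ k, p k * ∑ l, Q k l * (ζ k * weightedPay θ (s.1 k) (t.1 l) (G k l)) := by
    simp only [payA_eq_sum_weightedPay, Finset.mul_sum, mul_assoc]
  have hpay_le :
      |payA θ G (fun kl => p kl.1 * Q kl.1 kl.2) ζ s t| ≤ ‖ζ‖ * ((∑' m, θ m) * ‖G‖) := by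
    rw [hpay]
    refine abs_sum_mul_le_of_mem_stdSimplex hp fun k =>
      abs_sum_mul_le_of_mem_stdSimplex (hQ k) fun l => ?_
    rw [abs_mul]
    refine mul_le_mul (norm_le_pi_norm ζ k)
      ((abs_weightedPay_le hθ hθ0 (s.2 k) (t.2 l) _).trans ?_) (abs_nonneg _) (norm_nonneg _)
    exact mul_le_mul_of_nonneg_left ((norm_le_pi_norm (G k) l).trans (norm_le_pi_norm G k))
      (tsum_nonneg hθ0)
  have hx_le : |∑ k, p k * x k| ≤ ‖x‖ :=
    abs_sum_mul_le_of_mem_stdSimplex hp fun k => norm_le_pi_norm x k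
  exact (abs_sub _ _).trans (add_le_add hpay_le hx_le)

lemma bddAbove_range_hDual (hθ : Summable θ) (hθ0 : ∀ m, 0 ≤ θ m)
    (hQ : ∀ k, Q k ∈ stdSimplex ℝ L) (t : Strat I J L J) :
    BddAbove (Set.range fun ps : stdSimplex ℝ K × Strat I J K I =>
      hDual θ G x Q ζ ps.1 ps.2 t) :=
  ⟨_, Set.forall_mem_range.2 fun ps =>
    (abs_le.1 (abs_hDual_le hθ hθ0 hQ ps.1.2 ps.2 t)).2⟩

lemma bddBelow_range_iSup_hDual [Nonempty K] [Nonempty I] (hθ : Summable θ)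
    (hθ0 : ∀ m, 0 ≤ θ m) (hQ : ∀ k, Q k ∈ stdSimplex ℝ L) :
    BddBelow (Set.range fun t : Strat I J L J =>
      ⨆ ps : stdSimplex ℝ K × Strat I J K I, hDual θ G x Q ζ ps.1 ps.2 t) := by
  obtain ⟨ps⟩ := (inferInstance : Nonempty (stdSimplex ℝ K × Strat I J K I))
  exact ⟨_, Set.forall_mem_range.2 fun t =>
    (abs_le.1 (abs_hDual_le hθ hθ0 hQ ps.1.2 ps.2 t)).1.trans
      (le_ciSup (bddAbove_range_hDual hθ hθ0 hQ t) ps)⟩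

lemma wPlus_le_of_forall_hDual_le [Nonempty K] [Nonempty I] (hθ : Summable θ)
    (hθ0 : ∀ m, 0 ≤ θ m) (hQ : ∀ k, Q k ∈ stdSimplex ℝ L) (t : Strat I J L J) {B : ℝ}
    (hB : ∀ p ∈ stdSimplex ℝ K, ∀ s : Strat I J K I, hDual θ G x Q ζ p s t ≤ B) :
    wPlus θ G x Q ζ ≤ B :=
  (ciInf_le (bddBelow_range_iSup_hDual hθ hθ0 hQ) t).trans
    (ciSup_le fun ps => hB ps.1 ps.1.2 ps.2)

lemma exists_forall_hDual_le_wPlus_add [Nonempty J] (hθ : Summable θ) (hθ0 : ∀ m, 0 ≤ θ m)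
    (hQ : ∀ k, Q k ∈ stdSimplex ℝ L) {ε : ℝ} (hε : 0 < ε) :
    ∃ t : Strat I J L J, ∀ p ∈ stdSimplex ℝ K, ∀ s : Strat I J K I,
      hDual θ G x Q ζ p s t ≤ wPlus θ G x Q ζ + ε := by
  obtain ⟨t, ht⟩ := exists_lt_of_ciInf_lt (lt_add_of_pos_right (wPlus θ G x Q ζ) hε)
  exact ⟨t, fun p hp s =>
    (le_ciSup (bddAbove_range_hDual hθ hθ0 hQ t) (⟨⟨p, hp⟩, s⟩ : stdSimplex ℝ K × _)).trans
      ht.le⟩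

lemma hDual_mix {ι : Type*} [Fintype ι] [Nonempty J] (hθ : Summable θ) (hθ0 : ∀ m, 0 ≤ θ m)
    (z : ι → K → ℝ) (p : K → ℝ) (s : Strat I J K I) {c : ι → ℝ} (hc : c ∈ stdSimplex ℝ ι)
    (ts : ι → Strat I J L J) :
    hDual θ G (fun k => ∑ j, z j k) Q ζ p s (Strat.mix c hc.1 ts)
      = ∑ j, hDual θ G (z j) Q (fun k => c j * ζ k) p s (ts j) := by
  simp only [hDual, payA_eq_sum_weightedPay, Finset.sum_sub_distrib]
  simp only [Strat.mix, weightedPay_kuhnMix hθ hθ0 (s.2 _) hc fun j => (ts j).2 _,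
    Finset.mul_sum]
  congr 1
  · conv_rhs => rw [Finset.sum_comm]
    refine Finset.sum_congr rfl fun k _ => ?_
    conv_rhs => rw [Finset.sum_comm]
    exact Finset.sum_congr rfl fun l _ => Finset.sum_congr rfl fun j _ => by ring
  · exact Finset.sum_comm

lemma wPlus_sum_le_sum_wPlus {ι : Type*} [Fintype ι] [Nonempty K] [Nonempty I] [Nonempty J]
    (hθ : Summable θ) (hθ0 : ∀ m, 0 ≤ θ m) (hQ : ∀ k, Q k ∈ stdSimplex ℝ L) (z : ι → K → ℝ)
    {c : ι → ℝ} (hc : c ∈ stdSimplex ℝ ι) :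
    wPlus θ G (fun k => ∑ j, z j k) Q ζ ≤ ∑ j, wPlus θ G (z j) Q (fun k => c j * ζ k) := by
  have : Nonempty ι := Finset.univ_nonempty_iff.1 <|
    Finset.nonempty_of_sum_ne_zero (f := c) (by rw [hc.2]; exact one_ne_zero)
  have hcard : (0 : ℝ) < Fintype.card ι := by exact_mod_cast Fintype.card_pos
  refine le_of_forall_pos_le_add fun ε hε => ?_
  choose t ht using fun j => exists_forall_hDual_le_wPlus_add (I := I) (G := G) (x := z j)
    (ζ := fun k => c j * ζ k) hθ hθ0 hQ (div_pos hε hcard)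
  refine wPlus_le_of_forall_hDual_le hθ hθ0 hQ (Strat.mix c hc.1 t) fun p hp s => ?_
  rw [hDual_mix hθ hθ0 z p s hc t]
  calc ∑ j, hDual θ G (z j) Q (fun k => c j * ζ k) p s (t j)
      ≤ ∑ j, (wPlus θ G (z j) Q (fun k => c j * ζ k) + ε / Fintype.card ι) :=
        Finset.sum_le_sum fun j _ => ht j p hp s
    _ = ∑ j, wPlus θ G (z j) Q (fun k => c j * ζ k) + ε := by
        rw [Finset.sum_add_distrib, Finset.sum_const, Finset.card_univ, nsmul_eq_mul,
          mul_div_cancel₀ _ hcard.ne']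

end DualGame

lemma sum_sum_sum_sum_comm {α β γ δ : Type*} [Fintype α] [Fintype β] [Fintype γ] [Fintype δ]
    (f : α → β → γ → δ → ℝ) :
    ∑ a, ∑ b, ∑ c, ∑ d, f a b c d = ∑ c, ∑ d, ∑ a, ∑ b, f a b c d := by
  simp only [← Fintype.sum_prod_type']
  exact Fintype.sum_equiv ((Equiv.prodAssoc α β (γ × δ)).symm.trans
    ((Equiv.prodComm _ _).trans (Equiv.prodAssoc γ δ (α × β)))) _ _ fun _ => rfl

noncomputable def shiftedEval (θ : ℕ → ℝ) (m : ℕ) : ℝ :=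
  θ (m + 1) / (1 - θ 0)

lemma summable_shiftedEval {θ : ℕ → ℝ} (hθ : Summable θ) : Summable (shiftedEval θ) :=
  ((summable_nat_add_iff 1).2 hθ).div_const _

lemma shiftedEval_nonneg {θ : ℕ → ℝ} (hθ0 : ∀ m, 0 ≤ θ m) (hθ1 : θ 0 < 1) (m : ℕ) :
    0 ≤ shiftedEval θ m :=
  div_nonneg (hθ0 _) (sub_pos.2 hθ1).le

lemma weightedPay_firstThen {K L I J : Type*} [Fintype I] [Fintype J] {θ : ℕ → ℝ}
    (hθ : Summable θ) (hθ0 : ∀ m, 0 ≤ θ m) (hθ1 : θ 0 < 1)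
    (s : Strat I J K I) {τ : J → ℝ} (hτ : τ ∈ stdSimplex ℝ J) (t : I → Strat I J L J) (k : K)
    (l : L) (g : I → J → ℝ) :
    weightedPay θ (s.1 k) ((Strat.firstThen τ hτ t).1 l) g
      = θ 0 * ∑ i, s.1 k [] i * ∑ j, τ j * g i j + (1 - θ 0) * ∑ i, s.1 k [] i *
          ∑ j, τ j * weightedPay (shiftedEval θ) ((s.cont (i, j)).1 k) ((t i).1 l) g := by
  have hshift : (fun m => θ (m + 1)) = fun m => (1 - θ 0) * shiftedEval θ m :=
    funext fun m => by rw [shiftedEval, mul_div_cancel₀ _ (sub_pos.2 hθ1).ne']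
  rw [weightedPay_eq_add_shift hθ hθ0 (s.2 k) ((Strat.firstThen τ hτ t).2 l), hshift]
  simp only [weightedPay_const_mul, Finset.mul_sum, mul_left_comm (1 - θ 0)]
  rfl

section Recursion

variable {K L I J : Type*} [Fintype K] [Fintype L] [Fintype I] [Fintype J]
  {θ : ℕ → ℝ} {G : K → L → I → J → ℝ}

lemma hDual_firstThen (hθ : Summable θ) (hθ0 : ∀ m, 0 ≤ θ m) (hθ1 : θ 0 < 1)
    {x : K → ℝ} {Q : K → L → ℝ}
    {τ : J → ℝ} (hτ : τ ∈ stdSimplex ℝ J) {y : I → K → ℝ}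
    (hy : ∀ i k, θ 0 * ∑ l, ∑ j, Q k l * τ j * G k l i j + (1 - θ 0) * y i k = x k)
    (p : K → ℝ) (s : Strat I J K I) (t : I → Strat I J L J) :
    hDual θ G x Q (fun _ => 1) p s (Strat.firstThen τ hτ t)
      = (1 - θ 0) * ∑ i, ∑ j, τ j * hDual (shiftedEval θ) G (y i) Q (fun _ => 1)
          (fun k => p k * s.1 k [] i) (s.cont (i, j)) (t i) := by
  have hx : ∑ k, p k * x k
      = θ 0 * ∑ i, ∑ k, p k * s.1 k [] i * ∑ l, ∑ j, Q k l * τ j * G k l i j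
        + (1 - θ 0) * ∑ i, ∑ k, p k * s.1 k [] i * y i k :=
    calc ∑ k, p k * x k = ∑ k, ∑ i, p k * s.1 k [] i * x k :=
          Finset.sum_congr rfl fun k _ => by
            rw [← Finset.sum_mul, ← Finset.mul_sum, (s.2 k []).2, mul_one]
      _ = ∑ i, ∑ k, p k * s.1 k [] i *
            (θ 0 * ∑ l, ∑ j, Q k l * τ j * G k l i j + (1 - θ 0) * y i k) := by
          rw [Finset.sum_comm]
          exact Finset.sum_congr rfl fun i _ => Finset.sum_congr rfl fun k _ => by rw [hy]
      _ = _ := by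
          rw [Finset.mul_sum, Finset.mul_sum, ← Finset.sum_add_distrib]
          refine Finset.sum_congr rfl fun i _ => ?_
          rw [Finset.mul_sum, Finset.mul_sum, ← Finset.sum_add_distrib]
          exact Finset.sum_congr rfl fun k _ => by ring
  have hfirst : ∑ k, ∑ l, p k * Q k l * 1 * (θ 0 * ∑ i, s.1 k [] i * ∑ j, τ j * G k l i j)
      = θ 0 * ∑ i, ∑ k, p k * s.1 k [] i * ∑ l, ∑ j, Q k l * τ j * G k l i j := by
    simp only [Finset.mul_sum]
    conv_rhs => rw [Finset.sum_comm]
    refine Finset.sum_congr rfl fun k _ => ?_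
    conv_rhs => rw [Finset.sum_comm]
    exact Finset.sum_congr rfl fun l _ => Finset.sum_congr rfl fun i _ =>
      Finset.sum_congr rfl fun j _ => by ring
  have hcont : ∑ k, ∑ l, p k * Q k l * 1 * ((1 - θ 0) * ∑ i, s.1 k [] i * ∑ j, τ j *
        weightedPay (shiftedEval θ) ((s.cont (i, j)).1 k) ((t i).1 l) (G k l))
      = (1 - θ 0) * ∑ i, ∑ j, τ j * ∑ k, ∑ l, p k * s.1 k [] i * Q k l * 1 *
        weightedPay (shiftedEval θ) ((s.cont (i, j)).1 k) ((t i).1 l) (G k l) := by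
    simp only [Finset.mul_sum]
    rw [sum_sum_sum_sum_comm]
    exact Finset.sum_congr rfl fun i _ => Finset.sum_congr rfl fun j _ =>
      Finset.sum_congr rfl fun k _ => Finset.sum_congr rfl fun l _ => by ring
  have hy' : ∑ i, ∑ j, τ j * ∑ k, p k * s.1 k [] i * y i k
      = ∑ i, ∑ k, p k * s.1 k [] i * y i k :=
    Finset.sum_congr rfl fun i _ => by rw [← Finset.sum_mul, hτ.2, one_mul]
  simp only [hDual, payA_eq_sum_weightedPay, weightedPay_firstThen hθ hθ0 hθ1 s hτ t,
    mul_add, Finset.sum_add_distrib, mul_sub, Finset.sum_sub_distrib]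
  rw [hfirst, hcont, hx, hy']
  ring

lemma wPlus_le_recursive [Nonempty K] [Nonempty I] [Nonempty J] (hθ : Summable θ)
    (hθ0 : ∀ m, 0 ≤ θ m) (hθ1 : θ 0 < 1) {x : K → ℝ} {Q : K → L → ℝ}
    (hQ : ∀ k, Q k ∈ stdSimplex ℝ L) {τ : J → ℝ} (hτ : τ ∈ stdSimplex ℝ J) {y : I → K → ℝ}
    (hy : ∀ i k, θ 0 * ∑ l, ∑ j, Q k l * τ j * G k l i j + (1 - θ 0) * y i k = x k) :
    wPlus θ G x Q (fun _ => 1)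
      ≤ (1 - θ 0) * ⨆ i, wPlus (shiftedEval θ) G (y i) Q (fun _ => 1) := by
  have h1θ : 0 < 1 - θ 0 := sub_pos.2 hθ1
  set M := ⨆ i, wPlus (shiftedEval θ) G (y i) Q (fun _ => 1)
  refine le_of_forall_pos_le_add fun ε hε => ?_
  choose t ht using fun i => exists_forall_hDual_le_wPlus_add (I := I) (G := G) (x := y i)
    (ζ := fun _ => 1) (summable_shiftedEval hθ) (shiftedEval_nonneg hθ0 hθ1) hQ
    (div_pos hε h1θ)
  refine wPlus_le_of_forall_hDual_le hθ hθ0 hQ (Strat.firstThen τ hτ t) fun p hp s => ?_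
  have hq : ∀ i k, 0 ≤ p k * s.1 k [] i := fun i k => mul_nonneg (hp.1 k) ((s.2 k []).1 i)
  have hq1 : ∑ i, ∑ k, p k * s.1 k [] i = 1 := by
    rw [Finset.sum_comm, ← hp.2]
    exact Finset.sum_congr rfl fun k _ => by rw [← Finset.mul_sum, (s.2 k []).2, mul_one]
  have hcont : ∀ i j, hDual (shiftedEval θ) G (y i) Q (fun _ => 1) (fun k => p k * s.1 k [] i)
      (s.cont (i, j)) (t i) ≤ (∑ k, p k * s.1 k [] i) * (M + ε / (1 - θ 0)) := fun i j =>
    hDual_le_sum_mul (hq i) fun p' hp' => (ht i p' hp' _).trans <|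
      add_le_add (le_ciSup (f := fun i => wPlus (shiftedEval θ) G (y i) Q fun _ => 1)
        (Set.finite_range _).bddAbove i) le_rfl
  rw [hDual_firstThen hθ hθ0 hθ1 hτ hy p s t]
  calc (1 - θ 0) * ∑ i, ∑ j, τ j * hDual (shiftedEval θ) G (y i) Q (fun _ => 1)
          (fun k => p k * s.1 k [] i) (s.cont (i, j)) (t i)
      ≤ (1 - θ 0) * ∑ i, ∑ j, τ j * ((∑ k, p k * s.1 k [] i) * (M + ε / (1 - θ 0))) := by
        gcongr with i _ j _
        · exact hτ.1 j
        · exact hcont i j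
    _ = (1 - θ 0) * M + ε := by
        simp only [← Finset.sum_mul, hτ.2, one_mul, hq1]
        field_simp

end Recursion

/-- Stages are indexed from `0`, so `θ 0` is the paper's `θ_1`. Attainment of the minimum at
`(τ, xf)` is encoded by `hfeas` and `hattain`, with the minmax `wPlus` as the value of the dual
game. -/
theorem stmt_17_general
    {K L I J : Type*} [Fintype K] [Fintype L] [Fintype I] [Fintype J]
    [Nonempty K] [Nonempty I] [Nonempty J]
    (G : K → L → I → J → ℝ)
    (θ : ℕ → ℝ) (hθ0 : ∀ m, 0 ≤ θ m) (hθ1 : HasSum θ 1) (hθlt : θ 0 < 1)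
    (θplus : ℕ → ℝ) (hθplus : ∀ m, θplus m = θ (m + 1) / (1 - θ 0))
    (x : K → ℝ) (Q : K → L → ℝ) (hQ : ∀ k, Q k ∈ stdSimplex ℝ L)
    (τ : L → J → ℝ)
    (τbar : J → ℝ) (hτbar : τbar ∈ stdSimplex ℝ J)
    (hnonrev : ∀ l, τ l = τbar)
    (PQ : J → K → ℝ)
    (hPQ : ∀ j k, PQ j k = ∑ l, Q k l * τ l j)
    (Qj : J → K → L → ℝ)
    (hQj : ∀ j k l, Qj j k l =
      if 0 < PQ j k then Q k l * τ l j / PQ j k else Q k l)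
    (ζj : J → K → ℝ)
    (hζj : ∀ j k, ζj j k = PQ j k)
    (GQ : I → K → ℝ)
    (hGQ : ∀ i k, GQ i k = ∑ l, ∑ j, Q k l * τbar j * G k l i j)
    (xf : I → J → K → ℝ)
    (hfeas : ∀ i k, (∑ j, xf i j k) = (x k - θ 0 * GQ i k) / (1 - θ 0))
    (hattain : wPlus (I := I) (J := J) θ G x Q (fun _ => 1) =
      (1 - θ 0) * ⨆ i : I, ∑ j, wPlus θplus G (xf i j) (Qj j) (ζj j)) :
    wPlus (I := I) (J := J) θ G x Q (fun _ => 1) =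
      (1 - θ 0) *
        ⨆ i : I, wPlus θplus G
          (fun k => (x k - θ 0 * GQ i k) / (1 - θ 0)) Q (fun _ => 1) := by
  have h1θ : 0 < 1 - θ 0 := sub_pos.2 hθlt
  obtain rfl : θplus = shiftedEval θ := funext hθplus
  have hPQ_eq : ∀ j k, PQ j k = τbar j := fun j k => by
    simp only [hPQ, hnonrev, ← Finset.sum_mul, (hQ k).2, one_mul]
  have hQj_eq : ∀ j, Qj j = Q := fun j => funext₂ fun k l => by
    rw [hQj, hnonrev, ← hPQ_eq j k]
    split_ifs with hpos
    · exact mul_div_cancel_right₀ _ hpos.ne'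
    · rfl
  have hζj_eq : ∀ j, ζj j = fun k => τbar j * (fun _ => (1 : ℝ)) k := fun j => funext fun k => by
    rw [hζj, hPQ_eq, mul_one]
  refine le_antisymm (wPlus_le_recursive hθ1.summable hθ0 hθlt hQ hτbar fun i k => ?_) ?_
  · rw [← hGQ]
    field_simp
    ring
  rw [hattain]
  refine mul_le_mul_of_nonneg_left (ciSup_mono (Set.finite_range _).bddAbove fun i => ?_) h1θ.le
  simp only [hQj_eq, hζj_eq, ← hfeas]
  exact wPlus_sum_le_sum_wPlus (summable_shiftedEval hθ1.summable)
    (shiftedEval_nonneg hθ0 hθlt) hQ (xf i) hτbar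

/-- if the minimum in the dual recursive formula is attained at a
pair `(τ,(x_{ij}))` with `τ` non-revealing (`τ^ℓ = τ̄` for all `ℓ`), then
`w_θ(x,Q) = (1−θ_1)·max_{i∈I} w_{θ⁺}((x−θ_1G^Q_{iτ̄})/(1−θ_1), Q)`, where
`w_θ(x,Q) := w_θ(x,Q;𝟏)`.  Attainment at `(τ,(x_{ij}))` is expressed by the
feasibility of `(τ,(x_{ij}))` together with the equality of
`(1−θ_1)·max_i Σ_j w_{θ⁺}(x_{ij},Q_j;ζ_j)` with the value `w_θ(x,Q)` of the
dual game (its minmax `wPlus`).  Stages are indexed from `0` (so `θ 0 = θ_1`);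
maxima over the finite set `I` are written as suprema. -/
theorem stmt_17
    {K L I J : Type*} [Fintype K] [Fintype L] [Fintype I] [Fintype J]
    [Nonempty K] [Nonempty L] [Nonempty I] [Nonempty J]
    (G : K → L → I → J → ℝ)
    (θ : ℕ → ℝ) (hθ0 : ∀ m, 0 ≤ θ m) (hθ1 : HasSum θ 1) (hθlt : θ 0 < 1)
    (θplus : ℕ → ℝ) (hθplus : ∀ m, θplus m = θ (m + 1) / (1 - θ 0))
    (x : K → ℝ) (Q : K → L → ℝ) (hQ : ∀ k, Q k ∈ stdSimplex ℝ L)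
    (τ : L → J → ℝ) (hτ : ∀ l, τ l ∈ stdSimplex ℝ J)
    (τbar : J → ℝ) (hτbar : τbar ∈ stdSimplex ℝ J)
    (hnonrev : ∀ l, τ l = τbar)
    (PQ : J → K → ℝ)
    (hPQ : ∀ j k, PQ j k = ∑ l, Q k l * τ l j)
    (Qj : J → K → L → ℝ)
    (hQj : ∀ j k l, Qj j k l =
      if 0 < PQ j k then Q k l * τ l j / PQ j k else Q k l)
    (ζj : J → K → ℝ)
    (hζj : ∀ j k, ζj j k = PQ j k)
    (GQ : I → K → ℝ)
    (hGQ : ∀ i k, GQ i k = ∑ l, ∑ j, Q k l * τbar j * G k l i j)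
    (xf : I → J → K → ℝ)
    (hfeas : ∀ i k, (∑ j, xf i j k) = (x k - θ 0 * GQ i k) / (1 - θ 0))
    (hattain : wPlus (I := I) (J := J) θ G x Q (fun _ => 1) =
      (1 - θ 0) * ⨆ i : I, ∑ j, wPlus θplus G (xf i j) (Qj j) (ζj j)) :
    wPlus (I := I) (J := J) θ G x Q (fun _ => 1) =
      (1 - θ 0) *
        ⨆ i : I, wPlus θplus G
          (fun k => (x k - θ 0 * GQ i k) / (1 - θ 0)) Q (fun _ => 1) :=
  stmt_17_general G θ hθ0 hθ1 hθlt θplus hθplus x Q hQ τ τbar hτbar hnonrev PQ hPQ Qj hQj ζj hζj GQ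
    hGQ xf hfeas hattain
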